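/- In any feasible update sequence, for every block b of flow pair c, all vertices of F_c^u ∩ b other than start(b) are updated strictly before start(b) is updated, and all vertices of b not on F_c^u are updated strictly after start(b) is updated. -/

import Mathlib

/-!
A formal model of congestion-free flow rerouting (network update scheduling).
An update flow network consists of a source `s`, a terminal `t`, edge
capacities, and `k` update flow pairs, each given by an old `s`-`t` path and
an update (new) `s`-`t` path (represented as lists of vertices) with a demand.
An update sequence assigns to every update `(v, i)` (vertex `v`, pair `i`) a
round; it is feasible if resolving all updates of earlier rounds together with
any subset of the current round always leaves, for every pair, a unique valid
(capacity-respecting) transient `s`-`t` path among the active edges, and the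
family of transient paths jointly respects the capacities.
-/

namespace FlowUpdate

variable {V : Type} [DecidableEq V] {k : ℕ}

/-- The edges of a path given as a list of vertices. -/
def edgesOf (p : List V) : List (V × V) := p.zip p.tail

/-- The subpath of `p` from vertex `a` to vertex `z` (inclusive). -/
def segment (p : List V) (a z : V) : List V :=
  ((p.dropWhile (fun v => decide (v ≠ a))).takeWhile (fun v => decide (v ≠ z))) ++ [z]

/-- The outgoing edge of `v` on the path `p`, if any. -/
def outEdge (p : List V) (v : V) : Option (V × V) :=
  (edgesOf p).find? (fun e => decide (e.1 = v))

/-- An update flow network with `k` update flow pairs. -/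
structure UFN (V : Type) (k : ℕ) where
  s : V
  t : V
  cap : V → V → ℕ
  old : Fin k → List V
  new : Fin k → List V
  demand : Fin k → ℕ

namespace UFN

/-- After resolving the set of updates `U`, edge `e` is active for pair `i` iff
it is an old edge whose tail is not yet updated, or a new edge whose tail is
updated. -/
def active (G : UFN V k) (U : Set (V × Fin k)) (i : Fin k) (e : V × V) : Prop :=
  (e ∈ edgesOf (G.old i) ∧ (e.1, i) ∉ U) ∨ (e ∈ edgesOf (G.new i) ∧ (e.1, i) ∈ U)

/-- `p` is a simple `s`-`t` path all of whose edges satisfy `E`. -/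
def IsPathIn (E : V × V → Prop) (s t : V) (p : List V) : Prop :=
  p.head? = some s ∧ p.getLast? = some t ∧ List.Chain' (fun u v => E (u, v)) p ∧ p.Nodup

/-- `p` respects the capacities for the demand of pair `i`. -/
def ValidPath (G : UFN V k) (i : Fin k) (p : List V) : Prop :=
  ∀ e ∈ edgesOf p, G.demand i ≤ G.cap e.1 e.2

/-- `T` is the unique valid transient path of pair `i` after resolving `U`. -/
def TransientPair (G : UFN V k) (U : Set (V × Fin k)) (i : Fin k) (T : List V) : Prop :=
  IsPathIn (G.active U i) G.s G.t T ∧ G.ValidPath i T ∧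
    ∀ p, IsPathIn (G.active U i) G.s G.t p → G.ValidPath i p → p = T

/-- After resolving `U`, every pair has a unique valid transient path, and the
family of transient paths jointly respects the capacities. -/
def TransientFamily (G : UFN V k) (U : Set (V × Fin k)) : Prop :=
  ∃ T : Fin k → List V,
    (∀ i, G.TransientPair U i (T i)) ∧
    (∀ u v : V, (∑ i : Fin k, if (u, v) ∈ edgesOf (T i) then G.demand i else 0) ≤ G.cap u v)

/-- An update sequence (an assignment of rounds to all updates) is feasible if
after resolving all updates of rounds `< r` together with any subset of the
updates of round `r`, all pairs admit a transient family. -/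
def Feasible (G : UFN V k) (R : V × Fin k → ℕ) : Prop :=
  ∀ r : ℕ, ∀ S : Set (V × Fin k), (∀ u ∈ S, R u = r) →
    G.TransientFamily ({u | R u < r} ∪ S)

/-- `p` is a simple path from the source to the terminal. -/
def IsStPath (G : UFN V k) (p : List V) : Prop :=
  p.head? = some G.s ∧ p.getLast? = some G.t ∧ p.Nodup

/-- Well-formedness of an update flow network: all old and new flows are simple
`s`-`t` paths, each pair forms a DAG, each new path respects capacities for its
own demand, and both the old family and the new family jointly respect the
capacities. -/
def WellFormed (G : UFN V k) : Prop :=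
  (∀ i, G.IsStPath (G.old i) ∧ G.IsStPath (G.new i)) ∧
  (∀ i, ∃ ord : V → ℕ, ∀ e ∈ edgesOf (G.old i) ++ edgesOf (G.new i), ord e.1 < ord e.2) ∧
  (∀ i, G.ValidPath i (G.new i)) ∧
  (∀ u v : V, (∑ i : Fin k, if (u, v) ∈ edgesOf (G.old i) then G.demand i else 0) ≤ G.cap u v) ∧
  (∀ u v : V, (∑ i : Fin k, if (u, v) ∈ edgesOf (G.new i) then G.demand i else 0) ≤ G.cap u v)

/-- The common vertices of the old and new path of pair `i`, in path order. -/
def commons (G : UFN V k) (i : Fin k) : List V :=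
  (G.old i).filter (fun v => decide (v ∈ G.new i))

/-- A block of pair `i` is a pair `(a, z)` of consecutive common vertices of the
old and new paths of `i`. -/
def IsBlock (G : UFN V k) (i : Fin k) (b : V × V) : Prop :=
  b ∈ edgesOf (G.commons i)

/-- A (candidate) block: a pair index together with its start and end vertices. -/
abbrev Blk (V : Type) (k : ℕ) := Fin k × V × V

def IsBlk (G : UFN V k) (b : Blk V k) : Prop := G.IsBlock b.1 b.2

/-- The old-path segment of a block. -/
def blkOldSeg (G : UFN V k) (b : Blk V k) : List V := segment (G.old b.1) b.2.1 b.2.2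

/-- The update-path segment of a block. -/
def blkNewSeg (G : UFN V k) (b : Blk V k) : List V := segment (G.new b.1) b.2.1 b.2.2

/-- Block `b1` depends on block `b2` (written `b1 → b2`) if they belong to
different pairs and some edge lies on `b1`'s update path and on `b2`'s old path
with capacity less than the sum of the two demands. -/
def Dep (G : UFN V k) (b1 b2 : Blk V k) : Prop :=
  G.IsBlk b1 ∧ G.IsBlk b2 ∧ b1.1 ≠ b2.1 ∧
  ∃ e : V × V, e ∈ edgesOf (G.blkNewSeg b1) ∧ e ∈ edgesOf (G.blkOldSeg b2) ∧
    G.cap e.1 e.2 < G.demand b1.1 + G.demand b2.1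

/-- The dependency graph contains a directed cycle. -/
def HasDepCycle (G : UFN V k) : Prop := ∃ b : Blk V k, Relation.TransGen G.Dep b b

/-- The number of rounds used by an update sequence. -/
def numRounds [Fintype V] (R : V × Fin k → ℕ) : ℕ :=
  (Finset.image R Finset.univ).card

/-- An update `(v, i)` is empty if `v`'s outgoing old edge and outgoing new edge
for pair `i` coincide (in particular if `v` has no outgoing edge for pair `i`). -/
def EmptyUpd (G : UFN V k) (u : V × Fin k) : Prop :=
  outEdge (G.old u.2) u.1 = outEdge (G.new u.2) u.1

instance (G : UFN V k) (u : V × Fin k) : Decidable (G.EmptyUpd u) :=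
  inferInstanceAs (Decidable (outEdge (G.old u.2) u.1 = outEdge (G.new u.2) u.1))

/-- `R` updates every block in (at most) 3 consecutive rounds: first all internal
update-path vertices of the block, then the start vertex, then all old-path-only
vertices of the block. -/
def BlockPattern (G : UFN V k) (R : V × Fin k → ℕ) : Prop :=
  ∀ b : Blk V k, G.IsBlk b → ∃ r : ℕ,
    (∀ v ∈ G.blkNewSeg b, v ≠ b.2.1 → v ≠ b.2.2 → R (v, b.1) = r) ∧
    R (b.2.1, b.1) = r + 1 ∧
    (∀ v ∈ G.blkOldSeg b, v ∉ G.new b.1 → R (v, b.1) = r + 2)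

/-- The size of the network (total length of the flow paths). -/
def size (G : UFN V k) : ℕ := ∑ i : Fin k, ((G.old i).length + (G.new i).length)

end UFN

end FlowUpdate

/-!
Acyclicity of each pair puts a vertex common to its old and update path, in particular the start
`a` of a block, on every transient path. Resolve `a` in its round and nothing else of that round:
the transient path leaves `a` along its update edge, and an interior vertex of the block's update
segment is off the old path, so the path can only continue along its update edge, which is active
only if that vertex is already updated. Inductively the path runs through the whole update segment
and all of its interior vertices were updated earlier than `a`. Dually, if an interior vertex `w`
of the old segment were updated no later than `a`, resolve `w` in its round: `a` is not yet
updated, the transient path follows the old segment from `a`, and that forces every interior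
vertex of the segment, `w` included, to be not yet updated.
-/

namespace FlowUpdate

section Lists

variable {α : Type}

@[simp]
theorem edgesOf_cons_cons (x y : α) (l : List α) :
    edgesOf (x :: y :: l) = (x, y) :: edgesOf (y :: l) := rfl

theorem mem_edgesOf_iff {p : List α} {x y : α} :
    (x, y) ∈ edgesOf p ↔ ∃ A B, p = A ++ x :: y :: B := by
  induction p with
  | nil => simp [edgesOf]
  | cons u p ih =>
    cases p with
    | nil =>
      simp only [edgesOf, List.tail_cons, List.zip_nil_right, List.not_mem_nil, false_iff]
      rintro ⟨A, B, h⟩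
      have := congrArg List.length h
      simp only [List.length_cons, List.length_nil, zero_add, List.length_append] at this
      omega
    | cons v p =>
      rw [edgesOf_cons_cons, List.mem_cons, ih]
      constructor
      · rintro (h | ⟨A, B, hAB⟩)
        · obtain ⟨rfl, rfl⟩ := Prod.mk.inj h
          exact ⟨[], p, rfl⟩
        · exact ⟨u :: A, B, by simp [hAB]⟩
      · rintro ⟨_ | ⟨w, A⟩, B, h⟩
        · simp_all
        · simp only [List.cons_append, List.cons.injEq] at h
          exact Or.inr ⟨A, B, h.2⟩

theorem mem_of_mem_edgesOf {p : List α} {x y : α} (h : (x, y) ∈ edgesOf p) : x ∈ p ∧ y ∈ p :=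
  (List.of_mem_zip h).imp_right List.mem_of_mem_tail

theorem mem_edgesOf_of_infix {p M : List α} {x y : α} (h : x :: y :: M <:+: p) :
    (x, y) ∈ edgesOf p := by
  obtain ⟨A, B, rfl⟩ := h
  exact mem_edgesOf_iff.2 ⟨A, M ++ B, by simp⟩

theorem rel_of_mem_edgesOf {R : α → α → Prop} {p : List α} (hp : p.IsChain R)
    {x y : α} (h : (x, y) ∈ edgesOf p) : R x y := by
  obtain ⟨A, B, rfl⟩ := mem_edgesOf_iff.1 h
  exact List.isChain_iff_forall_rel_of_append_cons_cons.1 hp rfl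

theorem eq_of_mem_edgesOf_of_nodup {p : List α} (hp : p.Nodup) {x y y' : α}
    (h : (x, y) ∈ edgesOf p) (h' : (x, y') ∈ edgesOf p) : y = y' := by
  classical
  obtain ⟨A, B, hAB⟩ := mem_edgesOf_iff.1 h
  obtain ⟨A', B', hAB'⟩ := mem_edgesOf_iff.1 h'
  have hidx (A B : List α) (h : p = A ++ x :: B) : p.idxOf x = A.length := by
    have hx : x ∉ A := fun hA => (List.nodup_append.1 (h ▸ hp)).2.2 x hA x List.mem_cons_self rfl
    simp [h, List.idxOf_append_of_notMem hx]
  have := (List.append_inj (hAB.symm.trans hAB') ((hidx A _ hAB).symm.trans (hidx A' _ hAB'))).2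
  simp only [List.cons.injEq] at this
  exact this.2.1

theorem exists_mem_edgesOf_of_ne_getLast {p : List α} {x t : α} (hx : x ∈ p)
    (ht : p.getLast? = some t) (hxt : x ≠ t) : ∃ y, (x, y) ∈ edgesOf p := by
  obtain ⟨A, _ | ⟨y, B⟩, rfl⟩ := List.append_of_mem hx
  · simp only [List.getLast?_append, List.getLast?_singleton, Option.some_or,
      Option.some.injEq] at ht
    exact absurd ht hxt
  · exact ⟨y, mem_edgesOf_iff.2 ⟨A, B, rfl⟩⟩

theorem exists_mem_edgesOf_of_head?_of_getLast? {q : α → Prop} {s t : α} :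
    ∀ {p : List α}, p.head? = some s → p.getLast? = some t → q s → ¬q t →
      ∃ u v, (u, v) ∈ edgesOf p ∧ q u ∧ ¬q v
  | [], hs, _, _, _ => by simp at hs
  | [u], hs, ht, hqs, hqt => by
    simp only [List.head?_cons, List.getLast?_singleton, Option.some.injEq] at hs ht
    exact absurd (ht ▸ hs ▸ hqs) hqt
  | u :: v :: p, hs, ht, hqs, hqt => by
    simp only [List.head?_cons, Option.some.injEq] at hs
    subst hs
    by_cases hqv : q v
    · obtain ⟨x, y, hxy, hqx, hqy⟩ := exists_mem_edgesOf_of_head?_of_getLast? (p := v :: p) rfl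
        (by simpa using ht) hqv hqt
      exact ⟨x, y, by simp [hxy], hqx, hqy⟩
    · exact ⟨u, v, by simp, hqs, hqv⟩

theorem exists_eq_of_mem_edgesOf_filter {q : α → Bool} {l : List α} {a z : α}
    (h : (a, z) ∈ edgesOf (l.filter q)) :
    ∃ P M Q, l = P ++ a :: (M ++ z :: Q) ∧ (∀ x ∈ M, q x = false) ∧ q a ∧ q z := by
  obtain ⟨C, D, hCD⟩ := mem_edgesOf_iff.1 h
  obtain ⟨l₁, l₂, rfl, -, hl₂⟩ := List.filter_eq_append_iff.1 hCD
  obtain ⟨N, L, rfl, -, hqa, hL⟩ := List.filter_eq_cons_iff.1 hl₂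
  obtain ⟨M, Q, rfl, hM, hqz, -⟩ := List.filter_eq_cons_iff.1 hL
  exact ⟨l₁ ++ N, M, Q, by simp, fun x hx => by simpa using hM x hx, hqa, hqz⟩

theorem segment_eq_of_nodup [DecidableEq α] {p P M Q : List α} {a z : α} (hp : p.Nodup)
    (h : p = P ++ a :: (M ++ z :: Q)) : segment p a z = a :: (M ++ [z]) := by
  subst h
  simp only [List.nodup_append, List.nodup_cons, List.mem_cons, List.mem_append] at hp
  have hP : ∀ x ∈ P, decide (x ≠ a) = true := fun x hx => by grind
  have hM : ∀ x ∈ a :: M, decide (x ≠ z) = true := fun x hx => by grind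
  rw [segment, List.dropWhile_append_of_pos hP, List.dropWhile_cons_of_neg (by simp),
    ← List.cons_append, List.takeWhile_append_of_pos hM, List.takeWhile_cons_of_neg (by simp)]
  simp

theorem forall_of_isChain_of_forced {E : α → α → Prop} {φ : α → Prop} {P Q T : List α} {t : α}
    (hE : ∀ x y, E x y → (x, y) ∈ edgesOf P ∧ φ x ∨ (x, y) ∈ edgesOf Q ∧ ¬φ x)
    (hT : T.IsChain E) (hTt : T.getLast? = some t) (hP : P.Nodup) (htQ : t ∈ Q) :
    ∀ {u : α} {M : List α}, u ∈ T → φ u → u ≠ t → u :: M <:+: P → (∀ x ∈ M, x ∉ Q) →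
      ∀ x ∈ M, φ x := by
  have hφ {x : α} (hxT : x ∈ T) (hxQ : x ∉ Q) : φ x := by
    obtain ⟨y, hxy⟩ := exists_mem_edgesOf_of_ne_getLast hxT hTt (fun h => hxQ (h ▸ htQ))
    rcases hE x y (rel_of_mem_edgesOf hT hxy) with h | h
    exacts [h.2, absurd (mem_of_mem_edgesOf h.1).1 hxQ]
  intro u M
  induction M generalizing u with
  | nil => simp
  | cons x M ih =>
    intro hu hφu hut hsub hM
    obtain ⟨y, huy⟩ := exists_mem_edgesOf_of_ne_getLast hu hTt hut
    have hyP : (u, y) ∈ edgesOf P := by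
      rcases hE u y (rel_of_mem_edgesOf hT huy) with h | h
      exacts [h.1, absurd hφu h.2]
    obtain rfl : x = y := eq_of_mem_edgesOf_of_nodup hP (mem_edgesOf_of_infix hsub) hyP
    have hxT := (mem_of_mem_edgesOf huy).2
    have hxQ := hM x List.mem_cons_self
    rintro w (_ | ⟨_, hw⟩)
    · exact hφ hxT hxQ
    · exact ih hxT (hφ hxT hxQ) (fun h => hxQ (h ▸ htQ))
        ((List.suffix_cons u _).isInfix.trans hsub) (fun x hx => hM x (List.mem_cons_of_mem _ hx))
        w hw

end Lists

section Sorted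

variable {α β : Type} [LinearOrder β] {f : α → β} {p : List α}

theorem pairwise_of_forall_mem_edgesOf (h : ∀ e ∈ edgesOf p, f e.1 < f e.2) :
    p.Pairwise (f · < f ·) := by
  have : IsTrans α (f · < f ·) := ⟨fun _ _ _ => lt_trans⟩
  refine List.isChain_iff_pairwise.1 (List.isChain_iff_forall_rel_of_append_cons_cons.2 ?_)
  rintro x y A B rfl
  exact h (x, y) (mem_edgesOf_iff.2 ⟨A, B, rfl⟩)

theorem eq_of_mem_edgesOf_of_le_of_lt (hp : p.Pairwise (f · < f ·)) {u v c : α}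
    (he : (u, v) ∈ edgesOf p) (hc : c ∈ p) (hu : f u ≤ f c) (hv : f c < f v) : c = u := by
  obtain ⟨A, B, rfl⟩ := mem_edgesOf_iff.1 he
  simp only [List.pairwise_append, List.pairwise_cons, List.mem_cons, List.mem_append] at hp hc
  grind

theorem le_of_head?_eq (hp : p.Pairwise (f · < f ·)) {s x : α} (hs : p.head? = some s)
    (hx : x ∈ p) : f s ≤ f x := by
  obtain _ | ⟨u, p⟩ := p
  · simp at hs
  · simp only [List.head?_cons, Option.some.injEq] at hs
    subst hs
    rcases List.mem_cons.1 hx with rfl | hx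
    exacts [le_rfl, (List.rel_of_pairwise_cons hp hx).le]

theorem lt_of_getLast?_eq (hp : p.Pairwise (f · < f ·)) {t x : α} (ht : p.getLast? = some t)
    (hx : x ∈ p) (hxt : x ≠ t) : f x < f t := by
  obtain ⟨A, B, rfl⟩ := List.append_of_mem hx
  have htB : t ∈ B := by
    obtain _ | ⟨y, B⟩ := B
    · simp only [List.getLast?_append, List.getLast?_singleton, Option.some_or,
        Option.some.injEq] at ht
      exact absurd ht hxt
    · simp only [List.getLast?_append_cons, List.getLast?_cons_cons] at ht
      exact List.mem_of_getLast? ht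
  exact List.rel_of_pairwise_cons (List.pairwise_append.1 hp).2.1 htB

theorem rel_of_pairwise_of_eq_append_cons_append_cons {R : α → α → Prop} (hp : p.Pairwise R)
    {N M Q : List α} {a z : α} (h : p = N ++ a :: (M ++ z :: Q)) :
    R a z ∧ ∀ x ∈ M, R a x ∧ R x z := by
  subst h
  simp only [List.pairwise_append, List.pairwise_cons, List.mem_append, List.mem_cons] at hp
  grind

theorem exists_eq_append_cons_append_cons (hp : p.Pairwise (f · < f ·)) {a z : α}
    (ha : a ∈ p) (hz : z ∈ p) (haz : f a < f z) : ∃ N M Q, p = N ++ a :: (M ++ z :: Q) := by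
  obtain ⟨N, L, rfl⟩ := List.append_of_mem ha
  have hzL : z ∈ L := by
    rcases List.mem_append.1 hz with hz | hz
    · exact absurd (List.pairwise_append.1 hp |>.2.2 z hz a List.mem_cons_self) haz.not_gt
    · rcases List.mem_cons.1 hz with rfl | hz
      exacts [absurd haz (lt_irrefl _), hz]
  obtain ⟨M, Q, rfl⟩ := List.append_of_mem hzL
  exact ⟨N, M, Q, rfl⟩

theorem mem_of_isChain_of_mem_of_mem {E : α → α → Prop} {P Q T : List α} {s t c : α}
    (hP : P.Pairwise (f · < f ·)) (hQ : Q.Pairwise (f · < f ·))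
    (hE : ∀ x y, E x y → (x, y) ∈ edgesOf P ∨ (x, y) ∈ edgesOf Q)
    (hT : T.IsChain E) (hTs : T.head? = some s) (hTt : T.getLast? = some t)
    (hPs : P.head? = some s) (hPt : P.getLast? = some t) (hcP : c ∈ P) (hcQ : c ∈ Q) :
    c ∈ T := by
  obtain rfl | hct := eq_or_ne c t
  · exact List.mem_of_getLast? hTt
  obtain ⟨u, v, huv, hu, hv⟩ := exists_mem_edgesOf_of_head?_of_getLast? (q := (f · ≤ f c))
    hTs hTt (le_of_head?_eq hP hPs hcP) (lt_of_getLast?_eq hP hPt hcP hct).not_ge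
  have hcu : c = u := by
    rcases hE u v (rel_of_mem_edgesOf hT huv) with h | h
    exacts [eq_of_mem_edgesOf_of_le_of_lt hP h hcP hu (not_le.1 hv),
      eq_of_mem_edgesOf_of_le_of_lt hQ h hcQ hu (not_le.1 hv)]
  exact hcu ▸ (mem_of_mem_edgesOf huv).1

end Sorted

namespace UFN

variable {V : Type} [DecidableEq V] {k : ℕ} {G : UFN V k} {i : Fin k}

theorem WellFormed.exists_rank (hWF : G.WellFormed) (i : Fin k) :
    ∃ f : V → ℕ, (G.old i).Pairwise (f · < f ·) ∧ (G.new i).Pairwise (f · < f ·) := by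
  obtain ⟨f, hf⟩ := hWF.2.1 i
  exact ⟨f, pairwise_of_forall_mem_edgesOf fun e he => hf e (List.mem_append_left _ he),
    pairwise_of_forall_mem_edgesOf fun e he => hf e (List.mem_append_right _ he)⟩

theorem WellFormed.mem_of_isPathIn (hWF : G.WellFormed) {U : Set (V × Fin k)} {T : List V}
    (hT : IsPathIn (G.active U i) G.s G.t T) {c : V} (ho : c ∈ G.old i) (hn : c ∈ G.new i) :
    c ∈ T := by
  obtain ⟨f, hfo, hfn⟩ := hWF.exists_rank i
  obtain ⟨hTs, hTt, hTc, -⟩ := hT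
  obtain ⟨hOs, hOt, -⟩ := (hWF.1 i).1
  exact mem_of_isChain_of_mem_of_mem hfo hfn (fun _ _ h => h.imp And.left And.left) hTc hTs hTt
    hOs hOt ho hn

theorem WellFormed.exists_eq_of_isBlock (hWF : G.WellFormed) {a z : V} (hb : G.IsBlock i (a, z)) :
    ∃ P M Q N M' Q', G.old i = P ++ a :: (M ++ z :: Q) ∧ G.new i = N ++ a :: (M' ++ z :: Q') ∧
      (∀ x ∈ M, x ∉ G.new i) ∧ (∀ x ∈ M', x ∉ G.old i) ∧ a ≠ G.t := by
  obtain ⟨f, hfo, hfn⟩ := hWF.exists_rank i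
  obtain ⟨P, M, Q, hold, hM, ha, hz⟩ := exists_eq_of_mem_edgesOf_filter hb
  simp only [decide_eq_true_eq, decide_eq_false_iff_not] at ha hz hM
  have haz := (rel_of_pairwise_of_eq_append_cons_append_cons hfo hold).1
  obtain ⟨N, M', Q', hnew⟩ := exists_eq_append_cons_append_cons hfn ha hz haz
  refine ⟨P, M, Q, N, M', Q', hold, hnew, hM, fun x hx hxo => ?_, ?_⟩
  · obtain ⟨hax, hxz⟩ := (rel_of_pairwise_of_eq_append_cons_append_cons hfn hnew).2 x hx
    have hxc : x ∈ G.commons i := List.mem_filter.2 ⟨hxo, by simp [hnew, hx]⟩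
    exact hax.ne' (congrArg f <|
      eq_of_mem_edgesOf_of_le_of_lt (hfo.sublist List.filter_sublist) hb hxc hax.le hxz)
  · rintro rfl
    have hzo : z ∈ G.old i := by simp [hold]
    exact haz.not_gt (lt_of_getLast?_eq hfo (hWF.1 i).1.2.1 hzo (ne_of_apply_ne f haz.ne'))

theorem Feasible.round_lt_of_mem_new_interior {R : V × Fin k → ℕ} (hR : G.Feasible R)
    (hWF : G.WellFormed) {a v : V} {M : List V} (ha : a ∈ G.old i) (hat : a ≠ G.t)
    (hsub : a :: M <:+: G.new i) (hM : ∀ x ∈ M, x ∉ G.old i) (hv : v ∈ M) :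
    R (v, i) < R (a, i) := by
  obtain ⟨T, hT, -⟩ := hR (R (a, i)) {(a, i)} (by simp)
  have haT := hWF.mem_of_isPathIn (hT i).1 ha (hsub.subset List.mem_cons_self)
  obtain ⟨⟨-, hTt, hTc, -⟩, -⟩ := hT i
  have hvU := forall_of_isChain_of_forced (φ := fun x => (x, i) ∈ _) (fun _ _ h => h.symm) hTc
    hTt (hWF.1 i).2.2.2 (List.mem_of_getLast? (hWF.1 i).1.2.1) haT (by simp) hat hsub hM v hv
  have hva : v ≠ a := fun h => hM v hv (h ▸ ha)
  simpa [hva] using hvU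

theorem Feasible.round_lt_of_mem_old_interior {R : V × Fin k → ℕ} (hR : G.Feasible R)
    (hWF : G.WellFormed) {a w : V} {M : List V} (ha : a ∈ G.new i) (hat : a ≠ G.t)
    (hsub : a :: M <:+: G.old i) (hM : ∀ x ∈ M, x ∉ G.new i) (hw : w ∈ M) :
    R (a, i) < R (w, i) := by
  by_contra! hwa
  obtain ⟨T, hT, -⟩ := hR (R (w, i)) {(w, i)} (by simp)
  have haT := hWF.mem_of_isPathIn (hT i).1 (hsub.subset List.mem_cons_self) ha
  obtain ⟨⟨-, hTt, hTc, -⟩, -⟩ := hT i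
  have haw : a ≠ w := fun h => hM w hw (h ▸ ha)
  -- the dual walk: old and update path swap roles, and "not yet updated" replaces "updated"
  have hwU := forall_of_isChain_of_forced (φ := fun x => (x, i) ∉ _)
    (fun _ _ h => h.imp_right fun h => ⟨h.1, not_not_intro h.2⟩) hTc hTt (hWF.1 i).1.2.2
    (List.mem_of_getLast? (hWF.1 i).2.2.1) haT (by simp [hwa.not_gt, haw]) hat hsub hM w hw
  simp at hwU

end UFN

end FlowUpdate

open FlowUpdate in
/-- In any feasible update sequence, for every block `b` of a flow
pair, all vertices of the update path of the block other than its start are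
updated strictly before the start, and all vertices of the block not on the
update flow are updated strictly after the start. -/
theorem stmt1 {V : Type} [DecidableEq V] {k : ℕ} (G : UFN V k)
    (hWF : G.WellFormed) (R : V × Fin k → ℕ) (hR : G.Feasible R)
    (b : UFN.Blk V k) (hb : G.IsBlk b) :
    (∀ v ∈ G.blkNewSeg b, v ≠ b.2.1 → v ≠ b.2.2 → R (v, b.1) < R (b.2.1, b.1)) ∧
    (∀ v ∈ G.blkOldSeg b, v ∉ G.new b.1 → R (b.2.1, b.1) < R (v, b.1)) := by
  obtain ⟨i, a, z⟩ := b
  obtain ⟨P, M, Q, N, M', Q', hold, hnew, hM, hM', hat⟩ := hWF.exists_eq_of_isBlock hb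
  have hNew : G.blkNewSeg (i, a, z) = a :: (M' ++ [z]) :=
    segment_eq_of_nodup (hWF.1 i).2.2.2 hnew
  have hOld : G.blkOldSeg (i, a, z) = a :: (M ++ [z]) :=
    segment_eq_of_nodup (hWF.1 i).1.2.2 hold
  refine ⟨fun v hv hva hvz => ?_, fun w hw hwn => ?_⟩
  · have hvM' : v ∈ M' := by simp_all
    exact hR.round_lt_of_mem_new_interior hWF (by simp [hold]) hat ⟨N, z :: Q', by simp [hnew]⟩
      hM' hvM'
  · have hwM : w ∈ M := by
      rw [hOld, List.mem_cons, List.mem_append, List.mem_singleton] at hw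
      rcases hw with rfl | hw | rfl
      · simp [hnew] at hwn
      · exact hw
      · simp [hnew] at hwn
    exact hR.round_lt_of_mem_old_interior hWF (by simp [hnew]) hat ⟨P, z :: Q, by simp [hold]⟩
      hM hwM
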